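/- Let n ≥ 1 be an integer and set z = −2(n² + n − 1)/(2n + 1) < 0. Then the periodic simple continued fraction [0; \overline{n, 2, n}] (the value of the infinite continued fraction [0, n, 2, n, n, 2, n, n, 2, n, …] with repeating block (n, 2, n)) converges, the periodic continued fraction [0, \overline{2(n²+n−1)/(2n+1)}] converges, and both are equal to (z + √(z² + 4))/2. -/

import Mathlib

/-- The value of the finite continued fraction `[z₁,…,zₙ] = z₁ + 1/(z₂ + 1/(⋯ + 1/zₙ))`
of real numbers. -/
noncomputable def cfVal : List ℝ → ℝ
  | [] => 0
  | [x] => x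
  | x :: y :: t => x + (cfVal (y :: t))⁻¹

lemma cfVal_cons (x : ℝ) (l : List ℝ) (hl : l ≠ []) : cfVal (x :: l) = x + (cfVal l)⁻¹ := by
  cases l with
  | nil => exact absurd rfl hl
  | cons y t => rfl

lemma cfVal_range_succ (b : ℕ → ℝ) (m : ℕ) (hm : 1 ≤ m) :
    cfVal ((List.range (m + 1)).map b)
      = b 0 + (cfVal ((List.range m).map fun k => b (k + 1)))⁻¹ := by
  rw [List.range_succ_eq_map, List.map_cons, List.map_map, cfVal_cons]
  · rfl
  · apply List.ne_nil_of_length_pos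
    simpa using (show 0 < m by omega)

lemma inv_step (a x y : ℝ) (ha : 0 < a) (hx : 0 ≤ x) (hy : 0 ≤ y) :
    |(a + x)⁻¹ - (a + y)⁻¹| ≤ a⁻¹ * a⁻¹ * |x - y| := by
  have hax : 0 < a + x := by linarith
  have hay : 0 < a + y := by linarith
  have h : (a + x)⁻¹ - (a + y)⁻¹ = (y - x) * ((a + x)⁻¹ * (a + y)⁻¹) := by
    field_simp
    ring
  rw [h, abs_mul, abs_sub_comm y x, mul_comm]
  apply mul_le_mul_of_nonneg_right _ (abs_nonneg _)
  rw [abs_of_pos (by positivity)]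
  gcongr <;> linarith

lemma tendsto_of_contract (f : ℕ → ℝ) (L c : ℝ) (p : ℕ) (hp : 0 < p)
    (hc0 : 0 ≤ c) (hc1 : c < 1)
    (h : ∀ m, |f (m + p) - L| ≤ c * |f m - L|) :
    Filter.Tendsto f Filter.atTop (nhds L) := by
  set B : ℝ := ∑ r ∈ Finset.range p, |f r - L| with hBdef
  have hBr : ∀ r < p, |f r - L| ≤ B := by
    intro r hr
    rw [hBdef]
    exact Finset.single_le_sum (f := fun i => |f i - L|) (fun i _ => abs_nonneg _)
      (Finset.mem_range.2 hr)
  have key : ∀ m, |f m - L| ≤ B * c ^ (m / p) := by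
    intro m
    induction m using Nat.strong_induction_on with
    | _ m ih =>
      by_cases hmp : m < p
      · rw [Nat.div_eq_of_lt hmp, pow_zero, mul_one]; exact hBr m hmp
      · push_neg at hmp
        have hm : m - p + p = m := Nat.sub_add_cancel hmp
        have h1 : |f m - L| ≤ c * |f (m - p) - L| := by
          conv_lhs => rw [← hm]
          exact h (m - p)
        have h2 := ih (m - p) (by omega)
        have hdiv : m / p = (m - p) / p + 1 := Nat.div_eq_sub_div hp hmp
        calc |f m - L| ≤ c * |f (m - p) - L| := h1
          _ ≤ c * (B * c ^ ((m - p) / p)) := mul_le_mul_of_nonneg_left h2 hc0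
          _ = B * c ^ ((m - p) / p + 1) := by ring
          _ = B * c ^ (m / p) := by rw [hdiv]
  have hdivtop : Filter.Tendsto (fun m : ℕ => m / p) Filter.atTop Filter.atTop := by
    apply Filter.tendsto_atTop_atTop.2
    intro b
    refine ⟨b * p, fun m hm => ?_⟩
    calc b = b * p / p := (Nat.mul_div_cancel b hp).symm
      _ ≤ m / p := Nat.div_le_div_right hm
  have hg : Filter.Tendsto (fun m : ℕ => B * c ^ (m / p)) Filter.atTop (nhds 0) := by
    have h0 := (tendsto_pow_atTop_nhds_zero_of_lt_one hc0 hc1).comp hdivtop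
    simpa using h0.const_mul B
  have habs : Filter.Tendsto (fun m => |f m - L|) Filter.atTop (nhds 0) :=
    squeeze_zero (fun m => abs_nonneg _) key hg
  have hsub : Filter.Tendsto (fun m => f m - L) Filter.atTop (nhds 0) :=
    tendsto_of_tendsto_of_tendsto_of_le_of_le (by simpa using habs.neg) habs
      (fun m => neg_abs_le _) (fun m => le_abs_self _)
  have := hsub.add_const L
  simpa using this

lemma g2_contract (w x y : ℝ) (hw : 2/3 ≤ w) (hx : 0 ≤ x) (hy : 0 ≤ y) :
    |(w + (w + x)⁻¹)⁻¹ - (w + (w + y)⁻¹)⁻¹| ≤ 1/2 * |x - y| := by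
  have hw0 : 0 < w := by linarith
  have hx0 : 0 < w + x := by linarith
  have hy0 : 0 < w + y := by linarith
  have hdx : 0 < w ^ 2 + w * x + 1 := by positivity
  have hdy : 0 < w ^ 2 + w * y + 1 := by positivity
  have hgx : 0 < w + (w + x)⁻¹ := by positivity
  have hgy : 0 < w + (w + y)⁻¹ := by positivity
  have ex : (w + (w + x)⁻¹)⁻¹ = (w + x) / (w ^ 2 + w * x + 1) := by
    have hmul : (w + (w + x)⁻¹) * ((w + x) / (w ^ 2 + w * x + 1)) = 1 := by
      field_simp
    exact inv_eq_of_mul_eq_one_right hmul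
  have ey : (w + (w + y)⁻¹)⁻¹ = (w + y) / (w ^ 2 + w * y + 1) := by
    have hmul : (w + (w + y)⁻¹) * ((w + y) / (w ^ 2 + w * y + 1)) = 1 := by
      field_simp
    exact inv_eq_of_mul_eq_one_right hmul
  rw [ex, ey]
  have hd : (w + x) / (w ^ 2 + w * x + 1) - (w + y) / (w ^ 2 + w * y + 1)
      = (x - y) / ((w ^ 2 + w * x + 1) * (w ^ 2 + w * y + 1)) := by
    field_simp
    ring
  rw [hd, abs_div, abs_of_pos (mul_pos hdx hdy)]
  have h13x : 13/9 ≤ w ^ 2 + w * x + 1 := by nlinarith [mul_nonneg hw0.le hx]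
  have h13y : 13/9 ≤ w ^ 2 + w * y + 1 := by nlinarith [mul_nonneg hw0.le hy]
  have hD : 2 ≤ (w ^ 2 + w * x + 1) * (w ^ 2 + w * y + 1) := by nlinarith
  calc |x - y| / ((w ^ 2 + w * x + 1) * (w ^ 2 + w * y + 1))
      ≤ |x - y| / 2 := by gcongr
    _ = 1/2 * |x - y| := by ring

lemma G_contract (N x y : ℝ) (hN : 1 ≤ N) (hx : 0 ≤ x) (hy : 0 ≤ y) :
    |(N + (2 + (N + x)⁻¹)⁻¹)⁻¹ - (N + (2 + (N + y)⁻¹)⁻¹)⁻¹| ≤ 1/4 * |x - y| := by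
  have hN0 : 0 < N := by linarith
  have hNi : N⁻¹ ≤ 1 := by rw [inv_le_one_iff₀]; right; exact hN
  have hNi0 : 0 ≤ N⁻¹ := by positivity
  have hux : (0:ℝ) ≤ (N + x)⁻¹ := by positivity
  have huy : (0:ℝ) ≤ (N + y)⁻¹ := by positivity
  have hvx : (0:ℝ) ≤ (2 + (N + x)⁻¹)⁻¹ := by positivity
  have hvy : (0:ℝ) ≤ (2 + (N + y)⁻¹)⁻¹ := by positivity
  have s1 := inv_step N x y hN0 hx hy
  have s2 := inv_step 2 ((N + x)⁻¹) ((N + y)⁻¹) (by norm_num) hux huy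
  have s3 := inv_step N ((2 + (N + x)⁻¹)⁻¹) ((2 + (N + y)⁻¹)⁻¹) hN0 hvx hvy
  have hN2 : N⁻¹ * N⁻¹ ≤ 1 := by nlinarith
  have c1 : N⁻¹ * N⁻¹ * |x - y| ≤ |x - y| :=
    mul_le_of_le_one_left (abs_nonneg _) hN2
  have c2 : |(N + x)⁻¹ - (N + y)⁻¹| ≤ |x - y| := le_trans s1 c1
  have c3 : |(2 + (N + x)⁻¹)⁻¹ - (2 + (N + y)⁻¹)⁻¹| ≤ 1/4 * |x - y| := by
    calc |(2 + (N + x)⁻¹)⁻¹ - (2 + (N + y)⁻¹)⁻¹|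
        ≤ (2:ℝ)⁻¹ * 2⁻¹ * |(N + x)⁻¹ - (N + y)⁻¹| := s2
      _ ≤ (2:ℝ)⁻¹ * 2⁻¹ * |x - y| := by
          apply mul_le_mul_of_nonneg_left c2 (by norm_num)
      _ = 1/4 * |x - y| := by ring
  calc |(N + (2 + (N + x)⁻¹)⁻¹)⁻¹ - (N + (2 + (N + y)⁻¹)⁻¹)⁻¹|
      ≤ N⁻¹ * N⁻¹ * |(2 + (N + x)⁻¹)⁻¹ - (2 + (N + y)⁻¹)⁻¹| := s3
    _ ≤ |(2 + (N + x)⁻¹)⁻¹ - (2 + (N + y)⁻¹)⁻¹| :=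
        mul_le_of_le_one_left (abs_nonneg _) hN2
    _ ≤ 1/4 * |x - y| := c3

lemma cfVal_singleton (x : ℝ) : cfVal [x] = x := rfl

lemma cfVal_cons_cons (x y : ℝ) (t : List ℝ) :
    cfVal (x :: y :: t) = x + (cfVal (y :: t))⁻¹ := rfl

lemma cfVal_peel (b : ℕ → ℝ) (i M : ℕ) (hM : 1 ≤ M) :
    cfVal ((List.range (M + 1)).map fun k => b (k + i))
      = b (0 + i) + (cfVal ((List.range M).map fun k => b (k + 1 + i)))⁻¹ :=
  cfVal_range_succ (fun k => b (k + i)) M hM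

/-- For an integer `n ≥ 1`, with `z = −2(n² + n − 1)/(2n + 1) < 0`, the
periodic simple continued fraction `[0; \overline{n, 2, n}]` converges, the periodic
continued fraction `[0, \overline{2(n²+n−1)/(2n+1)}]` converges, and both equal
`(z + √(z² + 4))/2`. The `m`-th approximant of `[0, w₁, w₂, …]` is `cfVal [w 0, …, w m]`
where `w 0 = 0`. -/
theorem alpha_2n1_1_2_periodic_cf (n : ℕ) (hn : 1 ≤ n) :
    (-(2 * ((n : ℝ) ^ 2 + n - 1)) / (2 * n + 1) < 0) ∧
    Filter.Tendsto
      (fun m => cfVal ((List.range (m + 1)).map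
        (fun k => if k = 0 then (0 : ℝ) else if k % 3 = 2 then 2 else (n : ℝ))))
      Filter.atTop
      (nhds ((-(2 * ((n : ℝ) ^ 2 + n - 1)) / (2 * n + 1) +
        Real.sqrt ((-(2 * ((n : ℝ) ^ 2 + n - 1)) / (2 * n + 1)) ^ 2 + 4)) / 2)) ∧
    Filter.Tendsto
      (fun m => cfVal ((List.range (m + 1)).map
        (fun k => if k = 0 then (0 : ℝ) else 2 * ((n : ℝ) ^ 2 + n - 1) / (2 * n + 1))))
      Filter.atTop
      (nhds ((-(2 * ((n : ℝ) ^ 2 + n - 1)) / (2 * n + 1) +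
        Real.sqrt ((-(2 * ((n : ℝ) ^ 2 + n - 1)) / (2 * n + 1)) ^ 2 + 4)) / 2)) := by
  have hN1 : (1 : ℝ) ≤ (n : ℝ) := by exact_mod_cast hn
  set N : ℝ := (n : ℝ) with hNdef
  have hd : (0 : ℝ) < 2 * N + 1 := by linarith
  set z : ℝ := -(2 * (N ^ 2 + N - 1)) / (2 * N + 1) with hzdef
  set S : ℝ := Real.sqrt (z ^ 2 + 4) with hSdef
  set L : ℝ := (z + S) / 2 with hLdef
  set w : ℝ := 2 * (N ^ 2 + N - 1) / (2 * N + 1) with hwdef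
  have hzw : z = -w := by rw [hzdef, hwdef]; ring
  have hS2 : S ^ 2 = z ^ 2 + 4 := Real.sq_sqrt (by positivity)
  clear_value L S w z N
  have hw23 : 2/3 ≤ w := by
    rw [hwdef, le_div_iff₀ hd]
    nlinarith
  have hw0 : 0 < w := by linarith
  have hz0 : z < 0 := by rw [hzw]; linarith
  have hS2' : S ^ 2 = w ^ 2 + 4 := by rw [hzw] at hS2; linear_combination hS2
  have hSpos : 0 ≤ S := by rw [hSdef]; positivity
  have hLpos : 0 < L := by
    have hwS : w < S := by
      have h1 : w ^ 2 < S ^ 2 := by nlinarith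
      nlinarith
    rw [hLdef, hzw]
    linarith
  have hquad : L ^ 2 + w * L = 1 := by
    rw [hLdef, hzw]
    linear_combination hS2' / 4
  have hw2 : w * (2 * N + 1) = 2 * (N ^ 2 + N - 1) := by
    rw [hwdef]
    field_simp
  have hquadc : (2 * N + 1) * L ^ 2 + 2 * (N ^ 2 + N - 1) * L = 2 * N + 1 := by
    linear_combination (2 * N + 1) * hquad - L * hw2
  -- fixed point facts
  have hNL : 0 < N + L := by linarith
  have h2NL : 0 < 2 + (N + L)⁻¹ := by positivity
  have hden2 : (0:ℝ) < 2 * (N + L) + 1 := by linarith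
  have hB : (2 + (N + L)⁻¹)⁻¹ = (N + L) / (2 * (N + L) + 1) := by
    have hA : (2 + (N + L)⁻¹) = (2 * (N + L) + 1) / (N + L) := by field_simp
    rw [hA, inv_div]
  have hC : N + (2 + (N + L)⁻¹)⁻¹
      = (N * (2 * (N + L) + 1) + (N + L)) / (2 * (N + L) + 1) := by
    rw [hB]
    field_simp
  have hGL : (N + (2 + (N + L)⁻¹)⁻¹)⁻¹ = L := by
    have hmul : L * (N + (2 + (N + L)⁻¹)⁻¹) = 1 := by
      rw [hC, ← mul_div_assoc, div_eq_one_iff_eq hden2.ne']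
      linear_combination hquadc
    exact (eq_inv_of_mul_eq_one_left hmul).symm
  have hgL : (w + L)⁻¹ = L := by
    have hmul : L * (w + L) = 1 := by linear_combination hquad
    exact (eq_inv_of_mul_eq_one_left hmul).symm
  refine ⟨hz0, ?_, ?_⟩
  · -- periodic (n, 2, n) continued fraction
    set a : ℕ → ℝ := fun k => if k = 0 then (0 : ℝ) else if k % 3 = 2 then 2 else N
      with hadef
    set s : ℕ → ℝ := fun m => cfVal ((List.range (m + 1)).map a) with hsdef
    have ha0 : a 0 = 0 := by simp [hadef]
    have ha1 : a 1 = N := by norm_num [hadef]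
    have ha2 : a 2 = 2 := by norm_num [hadef]
    have ha3 : a 3 = N := by norm_num [hadef]
    have hs0 : s 0 = 0 := by
      simp only [hsdef]
      show cfVal [a 0] = 0
      rw [cfVal_singleton, ha0]
    have hs1 : s 1 = N⁻¹ := by
      simp only [hsdef]
      show cfVal [a 0, a 1] = N⁻¹
      rw [cfVal_cons_cons, cfVal_singleton, ha0, ha1, zero_add]
    have hs2 : s 2 = (N + 2⁻¹)⁻¹ := by
      simp only [hsdef]
      show cfVal [a 0, a 1, a 2] = (N + 2⁻¹)⁻¹
      rw [cfVal_cons_cons, cfVal_cons_cons, cfVal_singleton, ha0, ha1, ha2, zero_add]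
    have hs_rec : ∀ m, s (m + 3) = (N + (2 + (N + s m)⁻¹)⁻¹)⁻¹ := by
      intro m
      match m with
      | 0 =>
        have h3 : s 3 = (N + (2 + (N + 0)⁻¹)⁻¹)⁻¹ := by
          simp only [hsdef]
          show cfVal [a 0, a 1, a 2, a 3] = _
          rw [cfVal_cons_cons, cfVal_cons_cons, cfVal_cons_cons, cfVal_singleton,
            ha0, ha1, ha2, ha3, zero_add, add_zero]
        rw [show (0:ℕ) + 3 = 3 from rfl, h3, hs0]
      | (m + 1) =>
        have hm : 1 ≤ m + 1 := by omega
        have e0 : s (m + 1 + 3) = (cfVal ((List.range (m + 4)).map fun k => a (k + 1)))⁻¹ := by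
          simp only [hsdef]
          show cfVal ((List.range (m + 4 + 1)).map a) = _
          rw [cfVal_range_succ a (m + 4) (by omega), ha0, zero_add]
        have e0' : s (m + 1) = (cfVal ((List.range (m + 1)).map fun k => a (k + 1)))⁻¹ := by
          simp only [hsdef]
          show cfVal ((List.range (m + 1 + 1)).map a) = _
          rw [cfVal_range_succ a (m + 1) hm, ha0, zero_add]
        have q1 : cfVal ((List.range (m + 4)).map fun k => a (k + 1))
            = a 1 + (cfVal ((List.range (m + 3)).map fun k => a (k + 2)))⁻¹ :=
          cfVal_peel a 1 (m + 3) (by omega)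
        have q2 : cfVal ((List.range (m + 3)).map fun k => a (k + 2))
            = a 2 + (cfVal ((List.range (m + 2)).map fun k => a (k + 3)))⁻¹ :=
          cfVal_peel a 2 (m + 2) (by omega)
        have q3 : cfVal ((List.range (m + 2)).map fun k => a (k + 3))
            = a 3 + (cfVal ((List.range (m + 1)).map fun k => a (k + 4)))⁻¹ :=
          cfVal_peel a 3 (m + 1) hm
        have e4 : (List.range (m + 1)).map (fun k => a (k + 4))
            = (List.range (m + 1)).map fun k => a (k + 1) := by
          apply List.map_congr_left
          intro k _
          simp only [hadef]
          have h4 : ¬(k + 4 = 0) := by omega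
          have h1' : ¬(k + 1 = 0) := by omega
          have h3 : (k + 4) % 3 = (k + 1) % 3 := by omega
          simp [h4, h1', h3]
        rw [e0, q1, q2, q3, e4, ← e0', ha1, ha2, ha3]
    have hs_nn : ∀ m, 0 ≤ s m := by
      intro m
      induction m using Nat.strong_induction_on with
      | _ m ih =>
        match m with
        | 0 => rw [hs0]
        | 1 => rw [hs1]; positivity
        | 2 => rw [hs2]; positivity
        | (k + 3) =>
          rw [hs_rec k]
          have hsm := ih k (by omega)
          have h1 : 0 < N + s k := by linarith
          have h2 : 0 < 2 + (N + s k)⁻¹ := by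
            have := inv_pos.2 h1
            linarith
          have h3 : 0 < N + (2 + (N + s k)⁻¹)⁻¹ := by
            have := inv_pos.2 h2
            linarith
          exact (inv_pos.2 h3).le
    have hcon : ∀ m, |s (m + 3) - L| ≤ 1/4 * |s m - L| := by
      intro m
      rw [hs_rec m]
      have h := G_contract N (s m) L hN1 (hs_nn m) hLpos.le
      rwa [hGL] at h
    exact tendsto_of_contract s L (1/4) 3 (by norm_num) (by norm_num) (by norm_num) hcon
  · -- constant continued fraction
    set b : ℕ → ℝ := fun k => if k = 0 then (0 : ℝ) else w with hbdef
    set t : ℕ → ℝ := fun m => cfVal ((List.range (m + 1)).map b) with htdef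
    have hb0 : b 0 = 0 := by simp [hbdef]
    have hbk : ∀ k, k ≠ 0 → b k = w := by
      intro k hk
      simp [hbdef, hk]
    have ht0 : t 0 = 0 := by
      simp only [htdef]
      show cfVal [b 0] = 0
      rw [cfVal_singleton, hb0]
    have ht_rec : ∀ m, t (m + 1) = (w + t m)⁻¹ := by
      intro m
      match m with
      | 0 =>
        have h1 : t 1 = w⁻¹ := by
          simp only [htdef]
          show cfVal [b 0, b 1] = w⁻¹
          rw [cfVal_cons_cons, cfVal_singleton, hb0, hbk 1 (by omega), zero_add]
        rw [h1, ht0, add_zero]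
      | (m + 1) =>
        have hm : 1 ≤ m + 1 := by omega
        have e0 : t (m + 2) = (cfVal ((List.range (m + 2)).map fun k => b (k + 1)))⁻¹ := by
          simp only [htdef]
          show cfVal ((List.range (m + 2 + 1)).map b) = _
          rw [cfVal_range_succ b (m + 2) (by omega), hb0, zero_add]
        have e0' : t (m + 1) = (cfVal ((List.range (m + 1)).map fun k => b (k + 1)))⁻¹ := by
          simp only [htdef]
          show cfVal ((List.range (m + 1 + 1)).map b) = _
          rw [cfVal_range_succ b (m + 1) hm, hb0, zero_add]
        have q1 : cfVal ((List.range (m + 2)).map fun k => b (k + 1))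
            = b 1 + (cfVal ((List.range (m + 1)).map fun k => b (k + 2)))⁻¹ :=
          cfVal_peel b 1 (m + 1) hm
        have e4 : (List.range (m + 1)).map (fun k => b (k + 2))
            = (List.range (m + 1)).map fun k => b (k + 1) := by
          apply List.map_congr_left
          intro k _
          rw [hbk (k + 2) (by omega), hbk (k + 1) (by omega)]
        rw [e0, q1, e4, ← e0', hbk 1 (by omega)]
    have ht2 : ∀ m, t (m + 2) = (w + (w + t m)⁻¹)⁻¹ := by
      intro m
      rw [show m + 2 = (m + 1) + 1 from rfl, ht_rec (m + 1), ht_rec m]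
    have ht_nn : ∀ m, 0 ≤ t m := by
      intro m
      induction m with
      | zero => rw [ht0]
      | succ k ih =>
        rw [ht_rec k]
        have h1 : 0 < w + t k := by linarith
        exact (inv_pos.2 h1).le
    have hcon : ∀ m, |t (m + 2) - L| ≤ 1/2 * |t m - L| := by
      intro m
      rw [ht2 m]
      have h := g2_contract w (t m) L hw23 (ht_nn m) hLpos.le
      rwa [hgL, hgL] at h
    exact tendsto_of_contract t L (1/2) 2 (by norm_num) (by norm_num) (by norm_num) hcon
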